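/- arXiv:1807.04242 — 3 statements merged into one kernel-verified Lean document; each statement's English description precedes it below -/
import Mathlib

section
/- Let R be a commutative ring with unity, A a p×p matrix over R, B a q×q matrix over R, and C a p×q matrix over R. If the characteristic polynomials P_A and P_B are coprime in the sense that there exist polynomials U, V ∈ R[Z] with U·P_A + V·P_B = 1, then there exists a p×q matrix M over R such that A·M − M·B = C. -/
/-- Cohn's lemma: if the characteristic polynomials of `A` and `B` are coprime
(in the sense that `U * P_A + V * P_B = 1` for some polynomials `U, V`),
then the Sylvester equation `A * M - M * B = C` has a solution `M`. -/
theorem stmt0 (R : Type*) [CommRing R] (p q : ℕ)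
    (A : Matrix (Fin p) (Fin p) R) (B : Matrix (Fin q) (Fin q) R)
    (C : Matrix (Fin p) (Fin q) R)
    (h : ∃ U V : Polynomial R, U * A.charpoly + V * B.charpoly = 1) :
    ∃ M : Matrix (Fin p) (Fin q) R, A * M - M * B = C := by
  obtain ⟨U, V, hUV⟩ := h
  have hA : Polynomial.aeval A A.charpoly = 0 := Matrix.aeval_self_charpoly A
  have hB : Polynomial.aeval B B.charpoly = 0 := Matrix.aeval_self_charpoly B
  have hUV' : B.charpoly * V + U * A.charpoly = 1 := by linear_combination hUV
  have hinv : (Polynomial.aeval A B.charpoly) * (Polynomial.aeval A V) = 1 := by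
    have := congrArg (Polynomial.aeval A) hUV'
    simpa [map_add, map_mul, hA] using this
  set N : Matrix (Fin p) (Fin q) R := (Polynomial.aeval A V) * C with hN
  set S : ℕ → Matrix (Fin p) (Fin q) R :=
    fun i => ∑ j ∈ Finset.range i, A ^ j * N * B ^ (i - 1 - j) with hS
  have hSrec : ∀ i, S (i + 1) = A * S i + N * B ^ i := by
    intro i
    rw [hS]
    simp only
    rw [Finset.sum_range_succ', Matrix.mul_sum]
    congr 1
    · refine Finset.sum_congr rfl fun j hj => ?_
      have h1 : i + 1 - 1 - (j + 1) = i - 1 - j := by omega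
      rw [h1, pow_succ']
      simp only [Matrix.mul_assoc]
    · simp
  have key : ∀ i, A * S i - S i * B = A ^ i * N - N * B ^ i := by
    intro i
    induction i with
    | zero => simp [hS]
    | succ i ih =>
      have hSB : S i * B = A * S i - (A ^ i * N - N * B ^ i) := by
        rw [← ih]; abel
      have e1 : A ^ (i + 1) * N = A * (A ^ i * N) := by
        rw [pow_succ', Matrix.mul_assoc]
      have e2 : N * B ^ (i + 1) = N * B ^ i * B := by
        rw [pow_succ]
        exact (Matrix.mul_assoc N (B ^ i) B).symm
      rw [hSrec i, Matrix.add_mul, Matrix.mul_assoc A (S i) B, hSB,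
        Matrix.mul_add, Matrix.mul_sub, Matrix.mul_sub, e1, e2]
      abel
  refine ⟨∑ i ∈ Finset.range (B.charpoly.natDegree + 1), B.charpoly.coeff i • S i, ?_⟩
  rw [Matrix.mul_sum, Matrix.sum_mul, ← Finset.sum_sub_distrib]
  have step : ∀ i ∈ Finset.range (B.charpoly.natDegree + 1),
      A * (B.charpoly.coeff i • S i) - (B.charpoly.coeff i • S i) * B
        = B.charpoly.coeff i • (A ^ i * N - N * B ^ i) := by
    intro i _
    rw [Matrix.mul_smul, Matrix.smul_mul, ← smul_sub, key i]
  rw [Finset.sum_congr rfl step]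
  have expand : ∑ i ∈ Finset.range (B.charpoly.natDegree + 1),
      B.charpoly.coeff i • (A ^ i * N - N * B ^ i)
      = (Polynomial.aeval A B.charpoly) * N - N * (Polynomial.aeval B B.charpoly) := by
    rw [Polynomial.aeval_eq_sum_range, Polynomial.aeval_eq_sum_range,
      Matrix.sum_mul, Matrix.mul_sum, ← Finset.sum_sub_distrib]
    refine Finset.sum_congr rfl fun i _ => ?_
    rw [smul_sub, Matrix.smul_mul, Matrix.mul_smul]
  rw [expand, hB, Matrix.mul_zero, sub_zero, hN, ← Matrix.mul_assoc, hinv, Matrix.one_mul]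
end

section
/- Let a₁, a₂ ∈ ℝ[[X₁,…,Xₙ]] be formal power series such that a₁² + a₂² equals a monomial X^β times a unit. Then the ideal (a₁, a₂) in ℝ[[X]] is generated by a monomial: there exists γ ∈ ℕⁿ with 2γ = β and power series ã₁, ã₂ with a_i = X^γ·ã_i and ã₁(0)² + ã₂(0)² ≠ 0. -/
/-!
Setting `Xᵢ = 0` maps `ℝ[[X]]` onto a power series ring in the remaining variables, and power
series rings over `ℝ` are formally real: in `f² + g²` the lexicographically smallest exponent
`2d` of `f` or `g` carries the coefficient `f_d² + g_d² > 0`. So if `βᵢ > 0`, then `Xᵢ` divides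
`a₁² + a₂²`, hence `a₁` and `a₂`, hence `Xᵢ²` divides `X^β g`, and `βᵢ ≥ 2` because `g` is a
unit. Dividing out `Xᵢ` and recursing on `β - 2eᵢ` gives `aᵢ = X^γ bᵢ` with `b₁² + b₂² = g`;
since `g` is a unit, `(b₁, b₂)` is the unit ideal and `(a₁, a₂) = (X^γ)`.
-/

open Finsupp

namespace Ideal

theorem span_pair_mul_left_eq_span_singleton {R : Type*} [CommRing R] {m b₁ b₂ : R}
    (h : span {b₁, b₂} = ⊤) : span {m * b₁, m * b₂} = span {m} := by
  have : span {m * b₁, m * b₂} = span {m} * span {b₁, b₂} := by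
    rw [span_mul_span', Set.singleton_mul, Set.image_pair]
  rw [this, h, mul_top]

theorem span_pair_eq_top_of_isUnit_sq_add_sq {R : Type*} [CommRing R] {b₁ b₂ : R}
    (h : IsUnit (b₁ ^ 2 + b₂ ^ 2)) : span {b₁, b₂} = ⊤ :=
  eq_top_of_isUnit_mem _ (mem_span_pair.2 ⟨b₁, b₂, by ring⟩) h

end Ideal

namespace MvPowerSeries

variable {σ R : Type*}

theorem X_dvd_iff_killCompl_eq_zero [CommSemiring R] {i : σ} {φ : MvPowerSeries σ R} :
    X i ∣ φ ↔ killCompl (Function.Embedding.subtype (· ≠ i)) φ = 0 := by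
  rw [X_dvd_iff, MvPowerSeries.ext_iff]
  simp only [coeff_killCompl, map_zero]
  constructor
  · intro h x
    exact h _ (embDomain_of_notMem_range _ _ _ (by simp))
  · intro h m hm
    obtain ⟨x, rfl⟩ : m ∈ Set.range (embDomain (Function.Embedding.subtype (· ≠ i))) := by
      rw [mem_range_embDomain_iff]
      intro j hj
      exact ⟨⟨j, by rintro rfl; exact (mem_support_iff.1 hj) hm⟩, rfl⟩
    exact h x

theorem X_ne_zero [Semiring R] [Nontrivial R] (i : σ) : (X i : MvPowerSeries σ R) ≠ 0 := by
  intro h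
  simpa using congrArg (coeff (single i 1)) h

theorem X_pow_dvd_monomial_mul_iff [Semiring R] [Nontrivial R] {g : MvPowerSeries σ R}
    (hg : IsUnit g) {s : σ} {k : ℕ} {β : σ →₀ ℕ} : X s ^ k ∣ monomial β 1 * g ↔ k ≤ β s := by
  classical
  rw [hg.dvd_mul_right, X_pow_dvd_iff]
  simp only [coeff_monomial]
  constructor
  · intro h
    by_contra! hlt
    simpa using h β hlt
  · intro h m hm
    rw [if_neg (by rintro rfl; omega)]

section Ordered

variable [LinearOrder σ] [WellFoundedGT σ]

theorem coeff_add_self_mul_self_of_le_lexOrder [Semiring R] {f : MvPowerSeries σ R}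
    {d : σ →₀ ℕ} (hd : toLex d ≤ lexOrder f) : coeff (d + d) (f * f) = coeff d f * coeff d f := by
  obtain hd | hd := hd.eq_or_lt
  · exact coeff_mul_of_add_lexOrder hd.symm hd.symm
  rw [coeff_eq_zero_of_lt_lexOrder hd, mul_zero]
  obtain rfl | hf := eq_or_ne f 0
  · simp
  obtain ⟨p, hp⟩ := exists_finsupp_eq_lexOrder_of_ne_zero hf
  apply coeff_eq_zero_of_lt_lexOrder
  rw [hp, WithTop.coe_lt_coe] at hd
  calc ((toLex (d + d) : Lex (σ →₀ ℕ)) : WithTop (Lex (σ →₀ ℕ)))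
      < ((toLex p + toLex p : Lex (σ →₀ ℕ)) : WithTop (Lex (σ →₀ ℕ))) :=
        WithTop.coe_lt_coe.2 (add_lt_add hd hd)
    _ = lexOrder f + lexOrder f := by rw [hp]; rfl
    _ ≤ lexOrder (f * f) := le_lexOrder_mul f f

variable [CommRing R] [LinearOrder R] [IsStrictOrderedRing R]

theorem mul_self_add_mul_self_ne_zero {f g : MvPowerSeries σ R} (hf : f ≠ 0)
    (hfg : lexOrder f ≤ lexOrder g) : f * f + g * g ≠ 0 := by
  obtain ⟨d, hd⟩ := exists_finsupp_eq_lexOrder_of_ne_zero hf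
  have hcoeff : coeff (d + d) (f * f + g * g) = coeff d f * coeff d f + coeff d g * coeff d g := by
    rw [map_add, coeff_add_self_mul_self_of_le_lexOrder hd.ge,
      coeff_add_self_mul_self_of_le_lexOrder (hd.ge.trans hfg)]
  intro h
  rw [h, map_zero, eq_comm, mul_self_add_mul_self_eq_zero] at hcoeff
  exact coeff_ne_zero_of_lexOrder hd.symm hcoeff.1

theorem sq_add_sq_eq_zero {f g : MvPowerSeries σ R} (h : f ^ 2 + g ^ 2 = 0) :
    f = 0 ∧ g = 0 := by
  rw [sq, sq] at h
  by_contra hfg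
  rcases le_total (lexOrder f) (lexOrder g) with hle | hle
  · exact mul_self_add_mul_self_ne_zero (fun hf ↦ hfg ⟨hf, by simp_all⟩) hle h
  · exact mul_self_add_mul_self_ne_zero (fun hg ↦ hfg ⟨by simp_all, hg⟩) hle (by rwa [add_comm])

theorem X_dvd_of_X_dvd_sq_add_sq {i : σ} {f g : MvPowerSeries σ R} (h : X i ∣ f ^ 2 + g ^ 2) :
    X i ∣ f ∧ X i ∣ g := by
  simp only [X_dvd_iff_killCompl_eq_zero, map_add, map_pow] at h ⊢
  exact sq_add_sq_eq_zero h

theorem exists_eq_monomial_mul_of_sq_add_sq_eq_monomial_mul {g : MvPowerSeries σ R}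
    (hg : IsUnit g) (β : σ →₀ ℕ) {a b : MvPowerSeries σ R} (h : a ^ 2 + b ^ 2 = monomial β 1 * g) :
    ∃ (γ : σ →₀ ℕ) (b₁ b₂ : MvPowerSeries σ R), γ + γ = β ∧
      a = monomial γ 1 * b₁ ∧ b = monomial γ 1 * b₂ ∧ b₁ ^ 2 + b₂ ^ 2 = g := by
  induction β using WellFoundedLT.induction generalizing a b with
  | ind β ih =>
  obtain rfl | ⟨i, hi⟩ := eq_or_ne β 0 |>.imp_right Finsupp.ne_iff.1
  · exact ⟨0, a, b, rfl, by simp, by simp, by simpa using h⟩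
  have hXi : X i ∣ a ^ 2 + b ^ 2 := by
    rw [h, ← pow_one (X i), X_pow_dvd_monomial_mul_iff hg]
    exact Nat.one_le_iff_ne_zero.2 hi
  obtain ⟨⟨a', rfl⟩, ⟨b', rfl⟩⟩ := X_dvd_of_X_dvd_sq_add_sq hXi
  have h' : X i ^ 2 * (a' ^ 2 + b' ^ 2) = monomial β 1 * g := by rw [← h]; ring
  have hβi : 2 ≤ β i := (X_pow_dvd_monomial_mul_iff hg).1 (h' ▸ dvd_mul_right _ _)
  obtain ⟨β', rfl⟩ : ∃ β', β = single i 2 + β' :=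
    ⟨β - single i 2, (add_tsub_cancel_of_le (single_le_iff.2 hβi)).symm⟩
  rw [← one_mul (1 : R), ← monomial_mul_monomial, ← X_pow_eq, mul_assoc] at h'
  have hlt : β' < single i 2 + β' :=
    lt_add_of_pos_left β' (pos_iff_ne_zero.2 (single_ne_zero.2 two_ne_zero))
  obtain ⟨γ, b₁, b₂, hγ, rfl, rfl, hb⟩ :=
    ih β' hlt (mul_left_cancel₀ (pow_ne_zero 2 (X_ne_zero i)) h')
  refine ⟨single i 1 + γ, b₁, b₂, ?_, ?_, ?_, hb⟩
  · rw [add_add_add_comm, ← single_add, hγ]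
  · rw [← mul_assoc, X_def, monomial_mul_monomial, one_mul]
  · rw [← mul_assoc, X_def, monomial_mul_monomial, one_mul]

end Ordered

end MvPowerSeries

/-- If `a₁² + a₂²` is a monomial times a unit in `ℝ[[X₁,…,Xₙ]]`, then the ideal
`(a₁, a₂)` is generated by a monomial `X^γ` with `2γ = β`: we can write
`aᵢ = X^γ · ãᵢ` with `ã₁(0)² + ã₂(0)² ≠ 0`. -/
theorem stmt14 (n : ℕ) (a₁ a₂ : MvPowerSeries (Fin n) ℝ) (β : Fin n →₀ ℕ)
    (g : MvPowerSeries (Fin n) ℝ)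
    (hg : MvPowerSeries.constantCoeff (σ := Fin n) (R := ℝ) g ≠ 0)
    (h : a₁ ^ 2 + a₂ ^ 2 = MvPowerSeries.monomial (σ := Fin n) (R := ℝ) β (1 : ℝ) * g) :
    ∃ (γ : Fin n →₀ ℕ) (b₁ b₂ : MvPowerSeries (Fin n) ℝ),
      γ + γ = β ∧
      a₁ = MvPowerSeries.monomial (σ := Fin n) (R := ℝ) γ (1 : ℝ) * b₁ ∧
      a₂ = MvPowerSeries.monomial (σ := Fin n) (R := ℝ) γ (1 : ℝ) * b₂ ∧
      (MvPowerSeries.constantCoeff (σ := Fin n) (R := ℝ) b₁) ^ 2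
        + (MvPowerSeries.constantCoeff (σ := Fin n) (R := ℝ) b₂) ^ 2 ≠ 0 ∧
      Ideal.span {a₁, a₂} = Ideal.span {MvPowerSeries.monomial (σ := Fin n) (R := ℝ) γ (1 : ℝ)} := by
  have hunit : IsUnit g := MvPowerSeries.isUnit_iff_constantCoeff.2 hg.isUnit
  obtain ⟨γ, b₁, b₂, hγ, rfl, rfl, hb⟩ :=
    MvPowerSeries.exists_eq_monomial_mul_of_sq_add_sq_eq_monomial_mul hunit β h
  refine ⟨γ, b₁, b₂, hγ, rfl, rfl, ?_, ?_⟩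
  · rwa [← map_pow, ← map_pow, ← map_add, hb]
  · exact Ideal.span_pair_mul_left_eq_span_singleton
      (Ideal.span_pair_eq_top_of_isUnit_sq_add_sq (hb ▸ hunit))
end

section
/- Let u(X) = u₁(X) + i·u₂(X) with u₁, u₂ ∈ ℝ[[X₁, X₂]] satisfying u₁² + u₂² = 1, and let a(X) = X₁ + i·X₂. If a(X)·u(X) ∈ ℝ[[X₁, X₂]], then a contradiction arises: X₁ divides u₁ and X₂ divides u₂, forcing u(0) = 0, contradicting u₁(0)² + u₂(0)² = 1. Hence there is no unit-modulus power series u with a·u real. -/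
open MvPowerSeries Finsupp

namespace MvPowerSeries

variable {σ R : Type*} [CommSemiring R]

theorem coeff_single_X_mul [DecidableEq σ] (i j : σ) (f : MvPowerSeries σ R) :
    coeff (single i 1) (X j * f) = if j = i then constantCoeff f else 0 := by
  rw [X, coeff_monomial_mul, one_mul]
  by_cases hji : j = i
  · subst hji
    simp
  · rw [if_neg, if_neg hji]
    intro hle
    simpa [single_apply, hji] using hle j

theorem constantCoeff_eq_zero_of_X_mul_add_X_mul_eq_zero {i j : σ} (hij : i ≠ j)
    {f g : MvPowerSeries σ R} (h : X i * f + X j * g = 0) : constantCoeff f = 0 := by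
  classical
  simpa [coeff_single_X_mul, hij.symm] using congrArg (coeff (single i 1)) h

end MvPowerSeries

/-- There is no power series `u = u₁ + i u₂` of unit modulus (`u₁² + u₂² = 1`)
in `ℝ[[X₁, X₂]]` making `(X₁ + i X₂) · u` real: the vanishing of the imaginary
part `X₁ u₂ + X₂ u₁ = 0` together with `u₁² + u₂² = 1` is contradictory. -/
theorem stmt17 (u₁ u₂ : MvPowerSeries (Fin 2) ℝ)
    (hunit : u₁ ^ 2 + u₂ ^ 2 = 1)
    (hreal : MvPowerSeries.X (0 : Fin 2) * u₂ + MvPowerSeries.X (1 : Fin 2) * u₁ = 0) :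
    False := by
  have h₂ : constantCoeff u₂ = 0 :=
    constantCoeff_eq_zero_of_X_mul_add_X_mul_eq_zero zero_ne_one hreal
  have h₁ : constantCoeff u₁ = 0 :=
    constantCoeff_eq_zero_of_X_mul_add_X_mul_eq_zero one_ne_zero ((add_comm _ _).trans hreal)
  simpa [h₁, h₂] using congrArg constantCoeff hunit
end
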